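/- In a Coxeter group W, if w₀ is the element of minimal length in the double coset W_X · w · W_Y, then every element v of this double coset can be written as v = u₁ · w₀ · u₂ with u₁ ∈ W_X, u₂ ∈ W_Y, and ℓ_S(v) = ℓ_S(u₁) + ℓ_S(w₀) + ℓ_S(u₂). -/

import Mathlib

/-!
In Tits' representation of `W` on `W × ZMod 2`, the second coordinate counts, modulo 2, how often a
reflection occurs in the right inversion sequence of a word; so this parity depends only on the
product of the word, which yields the exchange condition. From it, if `u` has minimal length in
`W_X u` then `ℓ (a * u) = ℓ a + ℓ u` for `a ∈ W_X`, and (Deodhar) `u * s i` is either again minimal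
in its coset or lies in `W_X u`. Following `w₀ * b` along a word for `b ∈ W_Y` therefore shows
that the minimal element of `W_X w₀ b` is `w₀ * c` with `c ∈ W_Y`. As `w₀` is also minimal in
`w₀ W_Y`, every `a * w₀ * c` has length `ℓ a + ℓ w₀ + ℓ c`.
-/

open CoxeterSystem

/-- The standard parabolic subgroup `W_X` of a Coxeter group. -/
def coxParabolic {B W : Type*} [Group W] {M : CoxeterMatrix B} (cs : CoxeterSystem M W)
    (X : Set B) : Subgroup W :=
  Subgroup.closure (cs.simple '' X)

theorem List.even_count_of_getElem_add_eq {α : Type*} [BEq α] (l : List α) (m : ℕ)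
    (hl : l.length = 2 * m) (h : ∀ k (hk : k < m), l[k] = l[k + m]) (a : α) :
    Even (l.count a) := by
  have : l.drop m = l.take m := List.ext_getElem (by simp; omega) fun k h₁ h₂ => by
    simp only [List.getElem_drop, List.getElem_take, Nat.add_comm m k]
    exact (h k (by simp at h₂; omega)).symm
  rw [← List.take_append_drop m l, List.count_append, this]
  exact ⟨_, rfl⟩

namespace CoxeterSystem

variable {B W : Type*} [Group W] {M : CoxeterMatrix B} (cs : CoxeterSystem M W)

local prefix:100 "s" => cs.simple
local prefix:100 "π" => cs.wordProd
local prefix:100 "ℓ" => cs.length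
local prefix:100 "ris " => cs.rightInvSeq
local prefix:100 "lis " => cs.leftInvSeq

theorem prod_map_alternatingWord_two_mul {G : Type*} [Monoid G] (f : B → G) (i i' : B) (m : ℕ) :
    ((alternatingWord i i' (2 * m)).map f).prod = (f i * f i') ^ m := by
  induction m with
  | zero => simp [alternatingWord]
  | succ m ih =>
    rw [Nat.mul_succ, alternatingWord_succ, alternatingWord_succ]
    simp [ih, pow_succ]

theorem reverse_alternatingWord_two_mul (i i' : B) (m : ℕ) :
    (alternatingWord i i' (2 * m)).reverse = alternatingWord i' i (2 * m) := by
  induction m with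
  | zero => rfl
  | succ m ih =>
    rw [Nat.mul_succ, alternatingWord_succ', alternatingWord_succ', alternatingWord_succ,
      alternatingWord_succ]
    simp [ih]

noncomputable section

open Classical

theorem even_count_rightInvSeq_alternatingWord (i i' : B) (t : W) :
    Even ((ris (alternatingWord i i' (2 * M i i'))).count t) := by
  rw [← reverse_alternatingWord_two_mul, rightInvSeq_reverse, List.count_reverse]
  -- the left inversion sequence of the word for `(s i' * s i) ^ M i i'` has period `M i i'`
  refine List.even_count_of_getElem_add_eq _ (M i i') (by simp) (fun k hk => ?_) t
  rw [getElem_leftInvSeq_alternatingWord cs i' i _ _ (by omega),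
    getElem_leftInvSeq_alternatingWord cs i' i _ _ (by omega),
    prod_alternatingWord_eq_mul_pow, prod_alternatingWord_eq_mul_pow,
    show (2 * k + 1) / 2 = k by omega, show (2 * (k + M i i') + 1) / 2 = k + M i i' by omega]
  simp [pow_add, simple_mul_simple_pow]

def titsPerm (i : B) : Equiv.Perm (W × ZMod 2) :=
  Function.Involutive.toPerm (fun p => (s i * p.1 * s i, p.2 + if p.1 = s i then 1 else 0))
    fun ⟨t, e⟩ => by
      have hconj : s i * t * s i = s i ↔ t = s i := by
        constructor <;> intro h
        · simpa [mul_assoc] using congrArg (fun x => s i * x * s i) h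
        · simp [h]
      ext
      · simp [mul_assoc]
      · simp only [hconj]; split_ifs <;> simp [add_assoc, CharTwo.add_self_eq_zero]

theorem titsPerm_apply (i : B) (t : W) (e : ZMod 2) :
    cs.titsPerm i (t, e) = (s i * t * s i, e + if t = s i then 1 else 0) := rfl

theorem prod_map_titsPerm_apply (ω : List B) (t : W) (e : ZMod 2) :
    (ω.map cs.titsPerm).prod (t, e) = (π ω * t * (π ω)⁻¹, e + (ris ω).count t) := by
  induction ω with
  | nil => simp
  | cons i ω ih =>
    have hconj : π ω * t * (π ω)⁻¹ = s i ↔ (π ω)⁻¹ * s i * π ω = t := by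
      constructor <;> intro h <;> rw [← h] <;> group
    simp only [List.map_cons, List.prod_cons, Equiv.Perm.mul_apply, ih, titsPerm_apply,
      rightInvSeq, List.count_cons, beq_iff_eq, hconj, wordProd_cons, mul_inv_rev, inv_simple]
    ext
    · simp [mul_assoc]
    · push_cast; ring

theorem isLiftable_titsPerm : M.IsLiftable cs.titsPerm := by
  intro i i'
  rw [← prod_map_alternatingWord_two_mul]
  ext ⟨t, e⟩ : 1
  rw [prod_map_titsPerm_apply, prod_alternatingWord_eq_mul_pow,
    (even_count_rightInvSeq_alternatingWord cs i i' t).natCast_zmod_two]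
  simp

def titsRep : W →* Equiv.Perm (W × ZMod 2) :=
  cs.lift ⟨cs.titsPerm, cs.isLiftable_titsPerm⟩

theorem titsRep_wordProd (ω : List B) : cs.titsRep (π ω) = (ω.map cs.titsPerm).prod := by
  simp [titsRep, wordProd, map_list_prod, Function.comp_def, lift_apply_simple]

theorem count_rightInvSeq_eq_of_wordProd_eq {ω ω' : List B} (h : π ω = π ω') (t : W) :
    ((ris ω).count t : ZMod 2) = (ris ω').count t := by
  have := congrArg (fun w => (cs.titsRep w (t, 0)).2) h
  simpa [titsRep_wordProd, prod_map_titsPerm_apply] using this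

theorem simple_mem_rightInvSeq {ω : List B} {i : B}
    (h : cs.IsRightDescent (π ω) i) : s i ∈ ris ω := by
  obtain ⟨ω', hω', hω'_eq⟩ := cs.exists_isReduced (π ω * s i)
  have hω'_not_mem : s i ∉ ris ω' := fun hmem => by
    have := (cs.isRightInversion_of_mem_rightInvSeq hω' hmem).2
    rw [← hω'_eq, simple_mul_simple_cancel_right] at this
    exact lt_asymm h this
  have hprod : π ω = π (ω'.concat i) := by
    rw [wordProd_concat, ← hω'_eq, simple_mul_simple_cancel_right]
  have hcount : ((ris ω).count (s i) : ZMod 2) = 1 := by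
    have hfix : MulAut.conj (s i) (s i) = s i := by simp
    rw [count_rightInvSeq_eq_of_wordProd_eq cs hprod, rightInvSeq_concat, List.concat_eq_append,
      List.count_append, List.count_singleton_self]
    nth_rw 1 [← hfix]
    rw [List.count_map_of_injective _ _ (MulAut.conj (s i)).injective,
      List.count_eq_zero.mpr hω'_not_mem]
    simp
  refine List.count_pos_iff.mp (Nat.pos_of_ne_zero fun h0 => ?_)
  simp [h0] at hcount

theorem simple_mem_leftInvSeq {ω : List B} {i : B} (h : cs.IsLeftDescent (π ω) i) :
    s i ∈ lis ω := by
  rw [← List.mem_reverse, ← rightInvSeq_reverse]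
  exact cs.simple_mem_rightInvSeq (by rwa [wordProd_reverse, isRightDescent_inv_iff])

theorem exists_simple_mul_wordProd_eq_eraseIdx {ω : List B} {i : B}
    (h : cs.IsLeftDescent (π ω) i) : ∃ j < ω.length, s i * π ω = π (ω.eraseIdx j) := by
  obtain ⟨j, hj, hget⟩ := List.mem_iff_getElem.mp (cs.simple_mem_leftInvSeq h)
  rw [length_leftInvSeq] at hj
  refine ⟨j, hj, ?_⟩
  rw [← getD_leftInvSeq_mul_wordProd, List.getD_eq_getElem _ 1 (by simpa), hget]

theorem isLeftDescent_or_length_conj_mul_lt {x y : W} {i : B}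
    (h : cs.IsLeftDescent (x * y) i) : cs.IsLeftDescent x i ∨ ℓ (x⁻¹ * s i * x * y) < ℓ y := by
  obtain ⟨α, hα, rfl⟩ := cs.exists_isReduced x
  obtain ⟨β, hβ, rfl⟩ := cs.exists_isReduced y
  rw [← wordProd_append] at h
  obtain ⟨j, hj, hexch⟩ := cs.exists_simple_mul_wordProd_eq_eraseIdx h
  rw [List.length_append] at hj
  by_cases hjα : j < α.length
  · left
    rw [List.eraseIdx_append_of_lt_length hjα, wordProd_append, wordProd_append,
      ← mul_assoc] at hexch
    have := cs.length_wordProd_le (α.eraseIdx j)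
    rw [IsLeftDescent, mul_right_cancel hexch, hα]
    have := List.length_eraseIdx_add_one hjα
    omega
  · right
    rw [List.eraseIdx_append_of_length_le (not_lt.mp hjα), wordProd_append, wordProd_append] at hexch
    have hconj : (π α)⁻¹ * s i * π α * π β = π (β.eraseIdx (j - α.length)) := by
      calc (π α)⁻¹ * s i * π α * π β = (π α)⁻¹ * (s i * (π α * π β)) := by group
        _ = π (β.eraseIdx (j - α.length)) := by rw [hexch, inv_mul_cancel_left]
    have := cs.length_wordProd_le (β.eraseIdx (j - α.length))
    have := List.length_eraseIdx_add_one (show j - α.length < β.length by omega)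
    rw [hconj, hβ]
    omega

end

section

variable {cs}

theorem simple_mem_coxParabolic {X : Set B} {i : B} (hi : i ∈ X) : s i ∈ coxParabolic cs X :=
  Subgroup.subset_closure ⟨i, hi, rfl⟩

theorem coxParabolic_induction_left {X : Set B}
    {p : (a : W) → a ∈ coxParabolic cs X → Prop} (one : p 1 (one_mem _))
    (mul : ∀ i (hi : i ∈ X) a (ha : a ∈ coxParabolic cs X), p a ha →
      p (s i * a) (mul_mem (simple_mem_coxParabolic hi) ha))
    {a : W} (ha : a ∈ coxParabolic cs X) : p a ha := by
  induction ha using Subgroup.closure_induction_left with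
  | one => exact one
  | mul_left _ hx _ hy ih =>
    obtain ⟨i, hi, rfl⟩ := hx
    exact mul i hi _ hy ih
  | inv_mul_cancel _ hx _ hy ih =>
    obtain ⟨i, hi, rfl⟩ := hx
    simpa [inv_simple] using mul i hi _ hy ih

theorem coxParabolic_induction_right {X : Set B}
    {p : (a : W) → a ∈ coxParabolic cs X → Prop} (one : p 1 (one_mem _))
    (mul : ∀ a (ha : a ∈ coxParabolic cs X) i (hi : i ∈ X), p a ha →
      p (a * s i) (mul_mem ha (simple_mem_coxParabolic hi)))
    {a : W} (ha : a ∈ coxParabolic cs X) : p a ha := by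
  induction ha using Subgroup.closure_induction_right with
  | one => exact one
  | mul_right _ hx _ hy ih =>
    obtain ⟨i, hi, rfl⟩ := hy
    exact mul _ hx i hi ih
  | mul_inv_cancel _ hx _ hy ih =>
    obtain ⟨i, hi, rfl⟩ := hy
    simpa [inv_simple] using mul _ hx i hi ih

variable (cs) in
def IsMinimalInCoset (X : Set B) (u : W) : Prop :=
  ∀ a ∈ coxParabolic cs X, ℓ u ≤ ℓ (a * u)

theorem IsMinimalInCoset.length_mul {X : Set B} {u : W} (hu : cs.IsMinimalInCoset X u)
    {a : W} (ha : a ∈ coxParabolic cs X) : ℓ (a * u) = ℓ a + ℓ u := by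
  induction ha using coxParabolic_induction_left with
  | one => simp
  | mul i hi a ha ih =>
    refine le_antisymm (cs.length_mul_le _ _) ?_
    rcases cs.length_simple_mul a i with ha_up | ha_down
    · rcases cs.length_simple_mul (a * u) i with hau_up | hau_down
      · rw [mul_assoc]; omega
      · have hdesc : cs.IsLeftDescent (a * u) i := by unfold IsLeftDescent; omega
        rcases cs.isLeftDescent_or_length_conj_mul_lt hdesc with ha_desc | hlt
        · unfold IsLeftDescent at ha_desc; omega
        · have hmem : a⁻¹ * s i * a ∈ coxParabolic cs X :=
            mul_mem (mul_mem (inv_mem ha) (simple_mem_coxParabolic hi)) ha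
          exact absurd (hu _ hmem) (not_le.mpr hlt)
    · have := cs.length_simple_mul (a * u) i
      rw [mul_assoc]; omega

theorem IsMinimalInCoset.length_mul_of_inv {Y : Set B} {u : W}
    (hu : cs.IsMinimalInCoset Y u⁻¹) {b : W} (hb : b ∈ coxParabolic cs Y) :
    ℓ (u * b) = ℓ u + ℓ b := by
  rw [← length_inv, mul_inv_rev, hu.length_mul (inv_mem hb), length_inv, length_inv, add_comm]

theorem IsMinimalInCoset.mul_simple {X : Set B} {u : W} (hu : cs.IsMinimalInCoset X u) (i : B) :
    cs.IsMinimalInCoset X (u * s i) ∨ ∃ a ∈ coxParabolic cs X, u * s i = a * u := by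
  refine or_iff_not_imp_left.mpr fun hnot => ?_
  simp only [IsMinimalInCoset, not_forall, not_le] at hnot
  obtain ⟨a, ha, hlt⟩ := hnot
  have hau := hu.length_mul ha
  have ha_one : ℓ a = 1 := by
    have h₁ : ℓ (a * u) ≤ ℓ (a * (u * s i)) + 1 := by
      simpa [mul_assoc] using cs.length_le_length_mul_add_right (a * u) (s i)
    have h₂ : ℓ (u * s i) ≤ ℓ u + 1 := by simpa using cs.length_mul_le u (s i)
    have h₃ : ℓ a ≠ 0 := fun h => by
      rw [cs.length_eq_zero_iff.mp h, one_mul] at hlt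
      exact lt_irrefl _ hlt
    omega
  obtain ⟨j, rfl⟩ := cs.length_eq_one_iff.mp ha_one
  rcases cs.isLeftDescent_or_length_conj_mul_lt hlt with hdesc | hlt'
  · rw [IsLeftDescent, hau, ha_one] at hdesc
    omega
  · rw [length_simple, Nat.lt_one_iff, length_eq_zero_iff] at hlt'
    refine ⟨s j, ha, ?_⟩
    have := congrArg (fun x => u * x * s i) hlt'
    simpa [mul_assoc, simple_mul_simple_self] using this.symm

theorem IsMinimalInCoset.exists_mul_eq {X Y : Set B} {u : W} (hu : cs.IsMinimalInCoset X u)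
    {b : W} (hb : b ∈ coxParabolic cs Y) :
    ∃ c ∈ coxParabolic cs Y, cs.IsMinimalInCoset X (u * c) ∧
      ∃ a ∈ coxParabolic cs X, u * b = a * (u * c) := by
  induction hb using coxParabolic_induction_right with
  | one => exact ⟨1, one_mem _, by simpa using hu, 1, one_mem _, by simp⟩
  | mul b _ i hi ih =>
    obtain ⟨c, hc, hmin, a, ha, hbc⟩ := ih
    rcases hmin.mul_simple i with hmin' | ⟨a', ha', hc'⟩
    · exact ⟨c * s i, mul_mem hc (simple_mem_coxParabolic hi), by rwa [← mul_assoc], a, ha,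
        by rw [← mul_assoc, hbc]; group⟩
    · exact ⟨c, hc, hmin, a * a', mul_mem ha ha', by rw [← mul_assoc, hbc, mul_assoc, hc']; group⟩

end

end CoxeterSystem

/-- If `w₀` is of minimal length in the double coset `W_X · w · W_Y`, then every element
`v` of the double coset can be written as `v = u₁ * w₀ * u₂` with `u₁ ∈ W_X`, `u₂ ∈ W_Y` and
`ℓ(v) = ℓ(u₁) + ℓ(w₀) + ℓ(u₂)`. -/
theorem double_coset_decomp {B W : Type*} [Group W] {M : CoxeterMatrix B}
    (cs : CoxeterSystem M W) (X Y : Set B) (w w₀ : W)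
    (hmem : ∃ u₁ ∈ coxParabolic cs X, ∃ u₂ ∈ coxParabolic cs Y, w₀ = u₁ * w * u₂)
    (hmin : ∀ v : W, (∃ u₁ ∈ coxParabolic cs X, ∃ u₂ ∈ coxParabolic cs Y, v = u₁ * w * u₂) →
      cs.length w₀ ≤ cs.length v) :
    ∀ v : W, (∃ u₁ ∈ coxParabolic cs X, ∃ u₂ ∈ coxParabolic cs Y, v = u₁ * w * u₂) →
      ∃ u₁ ∈ coxParabolic cs X, ∃ u₂ ∈ coxParabolic cs Y,
        v = u₁ * w₀ * u₂ ∧ cs.length v = cs.length u₁ + cs.length w₀ + cs.length u₂ := by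
  obtain ⟨p, hp, q, hq, hw₀⟩ := hmem
  have hw : w = p⁻¹ * w₀ * q⁻¹ := by rw [hw₀]; group
  have hminX : cs.IsMinimalInCoset X w₀ := fun a ha =>
    hmin _ ⟨a * p, mul_mem ha hp, q, hq, by rw [hw]; group⟩
  have hminY : cs.IsMinimalInCoset Y w₀⁻¹ := fun b hb => by
    rw [length_inv, ← cs.length_inv (b * w₀⁻¹), mul_inv_rev, inv_inv]
    exact hmin _ ⟨p, hp, q * b⁻¹, mul_mem hq (inv_mem hb), by rw [hw]; group⟩
  rintro v ⟨u₁, hu₁, u₂, hu₂, rfl⟩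
  obtain ⟨c, hc, hminc, a, ha, hbc⟩ := hminX.exists_mul_eq (mul_mem (inv_mem hq) hu₂)
  have hv : u₁ * w * u₂ = (u₁ * p⁻¹ * a) * (w₀ * c) := by
    rw [hw, mul_assoc (u₁ * p⁻¹), ← hbc]; group
  refine ⟨u₁ * p⁻¹ * a, mul_mem (mul_mem hu₁ (inv_mem hp)) ha, c, hc, by rw [hv]; group, ?_⟩
  rw [hv, hminc.length_mul (mul_mem (mul_mem hu₁ (inv_mem hp)) ha), hminY.length_mul_of_inv hc,
    add_assoc]
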